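/- Let ω > 0, let f: ℝ × ℝ³ × ℝ³ → ℝ and E = (E₁,E₂,E₃): ℝ × ℝ³ → ℝ³ be continuously differentiable, and fix t ∈ ℝ, s ∈ ℝ, x, v ∈ ℝ³. Define G_t(s,x) := (cos(ω(s−t))E₁(s,x) − sin(ω(s−t))E₂(s,x), sin(ω(s−t))E₁(s,x) + cos(ω(s−t))E₂(s,x), E₃(s,x)) and H_t(s,x) := ((sin(ω(s−t))/ω)E₁(s,x) + ((cos(ω(s−t))−1)/ω)E₂(s,x), ((1−cos(ω(s−t)))/ω)E₁(s,x) + (sin(ω(s−t))/ω)E₂(s,x), (s−t)E₃(s,x)). Then, with (X,V) = (X(s;t,x,v), V(s;t,x,v)) the magnetized free characteristics, the following pointwise identity holds: div_v [ (f G_t)(s, X(s;t,x,v), V(s;t,x,v)) ] = [div_v(f E)](s, X(s;t,x,v), V(s;t,x,v)) + div_x [ (f H_t)(s, X(s;t,x,v), V(s;t,x,v)) ], where on the left-hand side and in the last term the divergences are taken with respect to the free variables v and x of the composite functions, while [div_v(f E)] denotes the v-divergence of (w ↦ f(s,y,w)E(s,y)) evaluated at the point (s, X(s;t,x,v), V(s;t,x,v)).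 -/

import Mathlib

open Real

/-- The velocity component of the magnetized free characteristics. -/
noncomputable def Vc (ω s t : ℝ) (v : Fin 3 → ℝ) : Fin 3 → ℝ :=
  ![v 0 * Real.cos (ω * (s - t)) + v 1 * Real.sin (ω * (s - t)),
    -(v 0 * Real.sin (ω * (s - t))) + v 1 * Real.cos (ω * (s - t)),
    v 2]

/-- The position component of the magnetized free characteristics. -/
noncomputable def Xc (ω s t : ℝ) (x v : Fin 3 → ℝ) : Fin 3 → ℝ :=
  ![x 0 + v 0 / ω * Real.sin (ω * (s - t)) + v 1 / ω * (1 - Real.cos (ω * (s - t))),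
    x 1 + v 0 / ω * (Real.cos (ω * (s - t)) - 1) + v 1 / ω * Real.sin (ω * (s - t)),
    x 2 + v 2 * (s - t)]

/-- The divergence of a vector field on `ℝ³`. -/
noncomputable def divg (F : (Fin 3 → ℝ) → (Fin 3 → ℝ)) (u : Fin 3 → ℝ) : ℝ :=
  ∑ i, fderiv ℝ F u (Pi.single i 1) i

/-- The rotated field `G_t(s,x)` built from `E`. -/
noncomputable def Gt (ω t : ℝ) (E : ℝ × (Fin 3 → ℝ) → (Fin 3 → ℝ))
    (p : ℝ × (Fin 3 → ℝ)) : Fin 3 → ℝ :=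
  ![Real.cos (ω * (p.1 - t)) * E p 0 - Real.sin (ω * (p.1 - t)) * E p 1,
    Real.sin (ω * (p.1 - t)) * E p 0 + Real.cos (ω * (p.1 - t)) * E p 1,
    E p 2]

/-- The field `H_t(s,x)` built from `E`. -/
noncomputable def Ht (ω t : ℝ) (E : ℝ × (Fin 3 → ℝ) → (Fin 3 → ℝ))
    (p : ℝ × (Fin 3 → ℝ)) : Fin 3 → ℝ :=
  ![Real.sin (ω * (p.1 - t)) / ω * E p 0 + (Real.cos (ω * (p.1 - t)) - 1) / ω * E p 1,
    (1 - Real.cos (ω * (p.1 - t))) / ω * E p 0 + Real.sin (ω * (p.1 - t)) / ω * E p 1,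
    (p.1 - t) * E p 2]


/-!
Write `V = O v` and `X = x + L v` with the rotation `O = rotationMatrix (ω (s - t))` and
`L = displacementMatrix ω (s - t)`; then `G_t = Oᵀ E` and `H_t = Lᵀ E`. Every divergence is the
trace of a Jacobian, so with `J₁`, `J₂` the partial Jacobians of `(y, w) ↦ f(s, y, w) E(s, y)` the
three terms are `tr (Oᵀ (J₁ L + J₂ O))`, `tr J₂` and `tr (Lᵀ J₁)`. Cyclicity of the trace reduces
the identity to `O Oᵀ = 1` and `L Oᵀ = Lᵀ`, both consequences of `sin² + cos² = 1`.
-/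

open Matrix

theorem hasFDerivAt_mulVec {ι ν : Type*} [Fintype ι] [DecidableEq ι] (M : Matrix ν ι ℝ)
    (u : ι → ℝ) :
    HasFDerivAt (fun w => M *ᵥ w) (LinearMap.toContinuousLinearMap (Matrix.toLin' M)) u :=
  (LinearMap.toContinuousLinearMap (Matrix.toLin' M)).hasFDerivAt

@[fun_prop]
theorem differentiable_mulVec {ι ν : Type*} [Fintype ι] [DecidableEq ι] (M : Matrix ν ι ℝ) :
    Differentiable ℝ (fun w => M *ᵥ w) :=
  fun u => (hasFDerivAt_mulVec M u).differentiableAt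

section Jacobian

variable {ι κ μ ν : Type*} [Fintype ι] [DecidableEq ι]

noncomputable def jacobian (F : (ι → ℝ) → (ν → ℝ)) (u : ι → ℝ) : Matrix ν ι ℝ :=
  LinearMap.toMatrix' (fderiv ℝ F u : (ι → ℝ) →ₗ[ℝ] (ν → ℝ))

theorem jacobian_mulVec (M : Matrix ν ι ℝ) (u : ι → ℝ) :
    jacobian (fun w => M *ᵥ w) u = M := by
  rw [jacobian, (hasFDerivAt_mulVec M u).fderiv, LinearMap.coe_toContinuousLinearMap,
    LinearMap.toMatrix'_toLin']

theorem jacobian_const_add [Fintype ν] (a : ν → ℝ) (F : (ι → ℝ) → (ν → ℝ)) (u : ι → ℝ) :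
    jacobian (fun w => a + F w) u = jacobian F u := by
  rw [jacobian, jacobian, fderiv_const_add]

theorem jacobian_comp_add_right [Fintype ν] (F : (ι → ℝ) → (ν → ℝ)) (c u : ι → ℝ) :
    jacobian (fun w => F (w + c)) u = jacobian F (u + c) := by
  rw [jacobian, jacobian, fderiv_comp_add_right]

theorem jacobian_mulVec_comp [Fintype μ] [Fintype ν] [DecidableEq ν] (M : Matrix μ ν ℝ)
    {F : (ι → ℝ) → (ν → ℝ)} {u : ι → ℝ} (hF : DifferentiableAt ℝ F u) :
    jacobian (fun w => M *ᵥ F w) u = M * jacobian F u := by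
  have h := (hasFDerivAt_mulVec M (F u)).comp u hF.hasFDerivAt
  rw [Function.comp_def] at h
  rw [jacobian, jacobian, h.fderiv, ContinuousLinearMap.toLinearMap_comp, LinearMap.toMatrix'_comp,
    LinearMap.coe_toContinuousLinearMap, LinearMap.toMatrix'_toLin']

theorem jacobian_comp_prodMk [Fintype κ] [DecidableEq κ] [Fintype μ] [DecidableEq μ] [Fintype ν]
    (Φ : (κ → ℝ) × (μ → ℝ) → (ν → ℝ)) {g : (ι → ℝ) → (κ → ℝ)}
    {h : (ι → ℝ) → (μ → ℝ)} {u : ι → ℝ} (hΦ : DifferentiableAt ℝ Φ (g u, h u))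
    (hg : DifferentiableAt ℝ g u) (hh : DifferentiableAt ℝ h u) :
    jacobian (fun w => Φ (g w, h w)) u =
      jacobian (fun y => Φ (y, h u)) (g u) * jacobian g u
        + jacobian (fun z => Φ (g u, z)) (h u) * jacobian h u := by
  have hD := hΦ.hasFDerivAt
  have h₁ := hD.comp (g u) (hasFDerivAt_prodMk_left (𝕜 := ℝ) (g u) (h u))
  have h₂ := hD.comp (h u) (hasFDerivAt_prodMk_right (𝕜 := ℝ) (g u) (h u))
  have h₁₂ := hD.comp u (hg.hasFDerivAt.prodMk hh.hasFDerivAt)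
  have hsplit : fderiv ℝ Φ (g u, h u) ∘L (fderiv ℝ g u).prod (fderiv ℝ h u)
      = (fderiv ℝ Φ (g u, h u) ∘L .inl ℝ _ _) ∘L fderiv ℝ g u
        + (fderiv ℝ Φ (g u, h u) ∘L .inr ℝ _ _) ∘L fderiv ℝ h u := by
    ext1 w
    simp [← map_add]
  simp only [Function.comp_def] at h₁ h₂ h₁₂
  rw [jacobian, jacobian, jacobian, jacobian, jacobian, h₁.fderiv, h₂.fderiv, h₁₂.fderiv, hsplit,
    ContinuousLinearMap.toLinearMap_add, map_add]
  congr 1 <;> exact LinearMap.toMatrix'_comp _ _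

end Jacobian

theorem divg_eq_trace_jacobian (F : (Fin 3 → ℝ) → (Fin 3 → ℝ)) (u : Fin 3 → ℝ) :
    divg F u = (jacobian F u).trace := by
  simp [divg, jacobian, Matrix.trace, LinearMap.toMatrix'_apply]

theorem Matrix.trace_transpose_mul_add_mul {n R : Type*} [Fintype n] [DecidableEq n] [CommRing R]
    (J₁ J₂ L O : Matrix n n R) (hO : O * Oᵀ = 1) (hL : L * Oᵀ = Lᵀ) :
    (Oᵀ * (J₁ * L + J₂ * O)).trace = J₂.trace + (Lᵀ * J₁).trace := by
  rw [Matrix.mul_add, trace_add, trace_mul_comm Oᵀ, trace_mul_comm Oᵀ, Matrix.mul_assoc,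
    Matrix.mul_assoc, hL, hO, Matrix.mul_one, trace_mul_comm J₁, add_comm]

noncomputable def rotationMatrix (θ : ℝ) : Matrix (Fin 3) (Fin 3) ℝ :=
  !![Real.cos θ, Real.sin θ, 0; -Real.sin θ, Real.cos θ, 0; 0, 0, 1]

noncomputable def displacementMatrix (ω τ : ℝ) : Matrix (Fin 3) (Fin 3) ℝ :=
  !![Real.sin (ω * τ) / ω, (1 - Real.cos (ω * τ)) / ω, 0;
    (Real.cos (ω * τ) - 1) / ω, Real.sin (ω * τ) / ω, 0;
    0, 0, τ]

theorem Vc_eq_mulVec (ω s t : ℝ) (w : Fin 3 → ℝ) :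
    Vc ω s t w = rotationMatrix (ω * (s - t)) *ᵥ w := by
  ext i
  fin_cases i <;> simp [Vc, rotationMatrix, Matrix.mulVec, dotProduct, Fin.sum_univ_three] <;> ring

theorem Xc_eq_add_mulVec (ω s t : ℝ) (x w : Fin 3 → ℝ) :
    Xc ω s t x w = x + displacementMatrix ω (s - t) *ᵥ w := by
  ext i
  fin_cases i <;> simp [Xc, displacementMatrix, dotProduct, Fin.sum_univ_three] <;> ring

theorem Gt_eq_transpose_mulVec (ω t : ℝ) (E : ℝ × (Fin 3 → ℝ) → (Fin 3 → ℝ))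
    (p : ℝ × (Fin 3 → ℝ)) : Gt ω t E p = (rotationMatrix (ω * (p.1 - t)))ᵀ *ᵥ E p := by
  ext i
  fin_cases i <;> simp [Gt, rotationMatrix, Matrix.mulVec, dotProduct, Fin.sum_univ_three, mul_comm,
    sub_eq_add_neg]

theorem Ht_eq_transpose_mulVec (ω t : ℝ) (E : ℝ × (Fin 3 → ℝ) → (Fin 3 → ℝ))
    (p : ℝ × (Fin 3 → ℝ)) : Ht ω t E p = (displacementMatrix ω (p.1 - t))ᵀ *ᵥ E p := by
  ext i
  fin_cases i <;> simp [Ht, displacementMatrix, Matrix.mulVec, dotProduct, Fin.sum_univ_three]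

theorem rotationMatrix_mul_transpose (θ : ℝ) : rotationMatrix θ * (rotationMatrix θ)ᵀ = 1 := by
  ext i j
  fin_cases i <;> fin_cases j <;> simp [rotationMatrix, Matrix.mul_apply, Fin.sum_univ_three] <;>
    grind [Real.sin_sq_add_cos_sq]

theorem displacementMatrix_mul_rotationMatrix_transpose (ω τ : ℝ) :
    displacementMatrix ω τ * (rotationMatrix (ω * τ))ᵀ = (displacementMatrix ω τ)ᵀ := by
  ext i j
  fin_cases i <;> fin_cases j <;>
    simp [rotationMatrix, displacementMatrix, Matrix.mul_apply, Fin.sum_univ_three] <;>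
    grind [Real.sin_sq_add_cos_sq]

theorem div_identity_magnetized_general (ω : ℝ)
    (f : ℝ × (Fin 3 → ℝ) × (Fin 3 → ℝ) → ℝ) (hf : ContDiff ℝ 1 f)
    (E : ℝ × (Fin 3 → ℝ) → (Fin 3 → ℝ)) (hE : ContDiff ℝ 1 E)
    (t s : ℝ) (x v : Fin 3 → ℝ) :
    divg (fun w => f (s, Xc ω s t x w, Vc ω s t w) • Gt ω t E (s, Xc ω s t x w)) v
      = divg (fun w => f (s, Xc ω s t x v, w) • E (s, Xc ω s t x v)) (Vc ω s t v)
        + divg (fun z => f (s, Xc ω s t z v, Vc ω s t v) • Ht ω t E (s, Xc ω s t z v)) x := by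
  set O := rotationMatrix (ω * (s - t))
  set L := displacementMatrix ω (s - t)
  set Φ : (Fin 3 → ℝ) × (Fin 3 → ℝ) → (Fin 3 → ℝ) := fun p => f (s, p.1, p.2) • E (s, p.1)
  have hΦ : Differentiable ℝ Φ := by
    have := hf.differentiable one_ne_zero
    have := hE.differentiable one_ne_zero
    fun_prop
  have hX : DifferentiableAt ℝ (fun w => x + L *ᵥ w) v := by fun_prop
  have hV : DifferentiableAt ℝ (fun w => O *ᵥ w) v := by fun_prop
  have hΦv : DifferentiableAt ℝ (fun w => Φ (x + L *ᵥ w, O *ᵥ w)) v := by fun_prop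
  have hΦx : DifferentiableAt ℝ (fun z => Φ (z + L *ᵥ v, O *ᵥ v)) x := by fun_prop
  have lhs : (fun w => f (s, Xc ω s t x w, Vc ω s t w) • Gt ω t E (s, Xc ω s t x w))
      = fun w => Oᵀ *ᵥ Φ (x + L *ᵥ w, O *ᵥ w) := by
    ext1 w
    simp only [Φ, O, L, Gt_eq_transpose_mulVec, Xc_eq_add_mulVec, Vc_eq_mulVec, mulVec_smul]
  have rhs : (fun z => f (s, Xc ω s t z v, Vc ω s t v) • Ht ω t E (s, Xc ω s t z v))
      = fun z => Lᵀ *ᵥ Φ (z + L *ᵥ v, O *ᵥ v) := by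
    ext1 z
    simp only [Φ, O, L, Ht_eq_transpose_mulVec, Xc_eq_add_mulVec, Vc_eq_mulVec, mulVec_smul]
  rw [lhs, rhs, divg_eq_trace_jacobian, divg_eq_trace_jacobian, divg_eq_trace_jacobian,
    jacobian_mulVec_comp _ hΦv, jacobian_comp_prodMk Φ (hΦ _) hX hV, jacobian_const_add,
    jacobian_mulVec, jacobian_mulVec, jacobian_mulVec_comp _ hΦx,
    jacobian_comp_add_right (fun y => Φ (y, O *ᵥ v)), Xc_eq_add_mulVec, Vc_eq_mulVec]
  exact Matrix.trace_transpose_mul_add_mul _ _ _ _ (rotationMatrix_mul_transpose _)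
    (displacementMatrix_mul_rotationMatrix_transpose _ _)

/-- the pointwise divergence identity
`div_v [(f G_t)(s, X(s;t,x,v), V(s;t,x,v))]
  = [div_v (f E)](s, X(s;t,x,v), V(s;t,x,v))
    + div_x [(f H_t)(s, X(s;t,x,v), V(s;t,x,v))]`,
where on the left (resp. last term) the divergence is taken with respect to the free
variable `v` (resp. `x`) of the composite function, and `[div_v (f E)]` is the
`v`-divergence of `w ↦ f(s,y,w) E(s,y)` evaluated at `(s, X(s;t,x,v), V(s;t,x,v))`. -/
theorem div_identity_magnetized (ω : ℝ) (hω : 0 < ω)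
    (f : ℝ × (Fin 3 → ℝ) × (Fin 3 → ℝ) → ℝ) (hf : ContDiff ℝ 1 f)
    (E : ℝ × (Fin 3 → ℝ) → (Fin 3 → ℝ)) (hE : ContDiff ℝ 1 E)
    (t s : ℝ) (x v : Fin 3 → ℝ) :
    divg (fun w => f (s, Xc ω s t x w, Vc ω s t w) • Gt ω t E (s, Xc ω s t x w)) v
      = divg (fun w => f (s, Xc ω s t x v, w) • E (s, Xc ω s t x v)) (Vc ω s t v)
        + divg (fun z => f (s, Xc ω s t z v, Vc ω s t v) • Ht ω t E (s, Xc ω s t z v)) x :=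
  div_identity_magnetized_general ω f hf E hE t s x v
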